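/- arXiv:2512.07607 — 2 statements merged into one kernel-verified Lean document; each statement's English description precedes it below -/
import Mathlib

section
/- Let K be an A-field and Υ a triangular t-module of dimension n over K with diagonal Drinfeld modules ψ_1,…,ψ_n of ranks r_1,…,r_n satisfying r_1 < r_2 < ⋯ < r_n. Then there exists a lower triangular matrix V ∈ Mat_n(K{τ}) with all diagonal entries equal to 1 such that V·Υ_t·V^{−1} is lower triangular with the same diagonal entries, and for all i < j the entry of V·Υ_t·V^{−1} in the row of ψ_i and the column of ψ_j has τ-degree strictly smaller than r_j (the rank of the Drinfeld module occupying the diagonal position of its column); in particular Υ allows for low-degree biderivations and no field extension is needed. -/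
open Polynomial Matrix Finset

noncomputable section

/-- Twisted ("skew") multiplication of polynomials in `τ`, determined by the rule
`τ · c = c^q · τ`:  `(Σᵢ aᵢτ^i) · (Σⱼ bⱼτ^j) = Σ_{i,j} aᵢ bⱼ^(q^i) τ^(i+j)`. -/
def twMul {K : Type*} [Field K] (q : ℕ) (f g : Polynomial K) : Polynomial K :=
  f.sum fun i a => g.sum fun j b => Polynomial.C (a * b ^ q ^ i) * Polynomial.X ^ (i + j)

/-- Twisted multiplication of matrices over the twisted polynomial ring `K{τ}`. -/
def twMatMul {K : Type*} [Field K] (q : ℕ) {α β γ : Type*} [Fintype β]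
    (A : Matrix α β (Polynomial K)) (B : Matrix β γ (Polynomial K)) :
    Matrix α γ (Polynomial K) :=
  Matrix.of fun i k => ∑ j, twMul q (A i j) (B j k)

/-- `ψ` is (the value at `t` of) a Drinfeld module of rank `r` over the `A`-field `(K, θ)`. -/
def IsDrinfeld {K : Type*} [Field K] (θ : K) (r : ℕ) (ψ : Polynomial K) : Prop :=
  1 ≤ r ∧ ψ.coeff 0 = θ ∧ ψ.natDegree = r ∧ ψ.coeff r ≠ 0

/-- `Υ` is (the value at `t` of) a triangular t-module of dimension `n` with diagonal
Drinfeld modules `ψ 0 = ψ₁, …, ψ (n-1) = ψₙ` of ranks `r 0, …, r (n-1)`:  `Υ` is lower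
triangular and its `(k,k)` diagonal entry is `ψ k.rev` (so `ψₙ` is top-left and
`ψ₁` is bottom-right). -/
def IsTriangular {K : Type*} [Field K] (θ : K) {n : ℕ}
    (Υ : Matrix (Fin n) (Fin n) (Polynomial K))
    (ψ : Fin n → Polynomial K) (r : Fin n → ℕ) : Prop :=
  (∀ i j : Fin n, i < j → Υ i j = 0) ∧
  (∀ k : Fin n, Υ k k = ψ k.rev) ∧
  (∀ i : Fin n, IsDrinfeld θ (r i) (ψ i))

/-!
Reduce the entries below the diagonal one at a time, sweeping the columns from right to left and
each column from top to bottom. For `b < a`, conjugating by `1 + v·E_ab` turns the entry `(a, b)`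
into `Υ_ab + v·Υ_bb - Υ_aa·v` and changes no entry met earlier in the sweep. Because
`deg Υ_aa < deg Υ_bb`, a monomial `v` can be chosen so that `v·Υ_bb` cancels the leading term of
`Υ_ab` while `Υ_aa·v` stays below it; repeating this brings `deg Υ_ab` below `deg Υ_bb`.
Composing the conjugations needs associativity of the twisted product, which holds because
`x ↦ x^q` is a ring endomorphism of `K`.
-/

theorem ne_zero_of_eq_pow_expChar (K : Type*) [AddMonoidWithOne K] {p s q : ℕ} [ExpChar K p]
    (hq : q = p ^ s) : q ≠ 0 :=
  hq ▸ pow_ne_zero s (expChar_pos K p).ne'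

section TwistedMul

variable {K : Type*} [Field K] {q : ℕ}

theorem zero_twMul (g : K[X]) : twMul q 0 g = 0 := Polynomial.sum_zero_index _

theorem twMul_zero (f : K[X]) : twMul q f 0 = 0 := by
  simp [twMul, Polynomial.sum_def]

theorem add_twMul (f f' g : K[X]) : twMul q (f + f') g = twMul q f g + twMul q f' g := by
  refine Polynomial.sum_add_index _ _ _ (fun _ => by simp [Polynomial.sum_def]) fun i a a' => ?_
  rw [← Polynomial.sum_add]
  congr 1
  funext j b
  rw [add_mul, C_add, add_mul]

theorem sum_twMul {κ : Type*} (t : Finset κ) (f : κ → K[X]) (g : K[X]) :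
    twMul q (∑ k ∈ t, f k) g = ∑ k ∈ t, twMul q (f k) g :=
  map_sum (AddMonoidHom.mk' (twMul q · g) fun f f' => add_twMul f f' g) f t

theorem twMul_monomial_left (m : ℕ) (c : K) (g : K[X]) :
    twMul q (monomial m c) g = g.sum fun j b => C (c * b ^ q ^ m) * X ^ (m + j) :=
  sum_monomial_index _ _ (by simp [Polynomial.sum_def])

theorem twMul_monomial_monomial (hq0 : q ≠ 0) (i j : ℕ) (a b : K) :
    twMul q (monomial i a) (monomial j b) = monomial (i + j) (a * b ^ q ^ i) := by
  rw [twMul_monomial_left, sum_monomial_index _ _ (by simp [zero_pow (pow_ne_zero i hq0)]),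
    C_mul_X_pow_eq_monomial]

theorem one_twMul (g : K[X]) : twMul q 1 g = g := by
  rw [← monomial_zero_one, twMul_monomial_left]
  simpa using g.sum_C_mul_X_pow_eq

theorem twMul_one (hq0 : q ≠ 0) (f : K[X]) : twMul q f 1 = f := by
  induction f using Polynomial.induction_on' with
  | add f f' hf hf' => rw [add_twMul, hf, hf']
  | monomial i a =>
    rw [← monomial_zero_one, twMul_monomial_monomial hq0, one_pow, mul_one, add_zero]

theorem natDegree_twMul_le (f g : K[X]) :
    (twMul q f g).natDegree ≤ f.natDegree + g.natDegree := by
  refine natDegree_sum_le_of_forall_le _ _ fun i hi =>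
    natDegree_sum_le_of_forall_le _ _ fun j hj => ?_
  exact (natDegree_C_mul_X_pow_le _ _).trans
    (add_le_add (le_natDegree_of_mem_supp i hi) (le_natDegree_of_mem_supp j hj))

theorem coeff_twMul_monomial_add (hq0 : q ≠ 0) (m : ℕ) (c : K) (g : K[X]) (k : ℕ) :
    (twMul q (monomial m c) g).coeff (m + k) = c * g.coeff k ^ q ^ m := by
  rw [twMul_monomial_left, Polynomial.sum_def, finsetSum_coeff]
  simp_rw [coeff_C_mul, coeff_X_pow, add_right_inj, mul_ite, mul_one, mul_zero]
  rw [Finset.sum_ite_eq]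
  split_ifs with hk
  · rfl
  · rw [notMem_support_iff.1 hk, zero_pow (pow_ne_zero m hq0), mul_zero]

theorem exists_natDegree_add_twMul_sub_twMul_lt (hq0 : q ≠ 0) {f g h : K[X]}
    (hhg : h.natDegree < g.natDegree) (hgf : g.natDegree ≤ f.natDegree) :
    ∃ v, (f + twMul q v g - twMul q h v).natDegree < f.natDegree := by
  set d := f.natDegree
  set m := d - g.natDegree
  have hg : g.leadingCoeff ^ q ^ m ≠ 0 :=
    pow_ne_zero _ (leadingCoeff_ne_zero.2 (ne_zero_of_natDegree_gt hhg))
  set v := monomial m (-f.leadingCoeff / g.leadingCoeff ^ q ^ m)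
  have hv : v.natDegree ≤ m := natDegree_monomial_le _
  have hvg : (twMul q v g).natDegree ≤ d := (natDegree_twMul_le v g).trans (by omega)
  have hhv : (twMul q h v).natDegree < d := (natDegree_twMul_le h v).trans_lt (by omega)
  have hvg_lead : (twMul q v g).coeff d = -f.leadingCoeff := by
    rw [show d = m + g.natDegree by omega, coeff_twMul_monomial_add hq0, coeff_natDegree,
      div_mul_cancel₀ _ hg]
  have hcoeff : (f + twMul q v g - twMul q h v).coeff d = 0 := by
    rw [coeff_sub, coeff_add, hvg_lead, coeff_eq_zero_of_natDegree_lt hhv]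
    simp [d]
  have hle : (f + twMul q v g - twMul q h v).natDegree ≤ d :=
    (natDegree_sub_le_of_le (natDegree_add_le_of_degree_le le_rfl hvg) hhv.le).trans
      (max_self d).le
  exact ⟨v, (natDegree_le_pred hle hcoeff).trans_lt (by omega)⟩

variable {p s : ℕ} [ExpChar K p]

theorem twMul_add (hq : q = p ^ s) (f g g' : K[X]) :
    twMul q f (g + g') = twMul q f g + twMul q f g' := by
  have hq0 : q ≠ 0 := ne_zero_of_eq_pow_expChar K hq
  rw [twMul, twMul, twMul, ← Polynomial.sum_add]
  congr 1
  funext i a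
  refine Polynomial.sum_add_index _ _ _ (fun _ => by simp [zero_pow (pow_ne_zero i hq0)])
    fun j b b' => ?_
  rw [hq, ← pow_mul, add_pow_expChar_pow, mul_add, C_add, add_mul]

theorem twMul_neg (hq : q = p ^ s) (f g : K[X]) : twMul q f (-g) = -twMul q f g :=
  map_neg (AddMonoidHom.mk' (twMul q f) (twMul_add hq f)) g

theorem twMul_sum (hq : q = p ^ s) {κ : Type*} (t : Finset κ) (f : K[X]) (g : κ → K[X]) :
    twMul q f (∑ k ∈ t, g k) = ∑ k ∈ t, twMul q f (g k) :=
  map_sum (AddMonoidHom.mk' (twMul q f) (twMul_add hq f)) g t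

theorem twMul_assoc (hq : q = p ^ s) (f g h : K[X]) :
    twMul q (twMul q f g) h = twMul q f (twMul q g h) := by
  have hq0 : q ≠ 0 := ne_zero_of_eq_pow_expChar K hq
  induction f using Polynomial.induction_on' with
  | add f f' hf hf' => rw [add_twMul, add_twMul, add_twMul, hf, hf']
  | monomial i a =>
  induction g using Polynomial.induction_on' with
  | add g g' hg hg' => rw [twMul_add hq, add_twMul, add_twMul, twMul_add hq, hg, hg']
  | monomial j b =>
  induction h using Polynomial.induction_on' with
  | add h h' hh hh' => rw [twMul_add hq, twMul_add hq, twMul_add hq, hh, hh']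
  | monomial k c =>
  simp only [twMul_monomial_monomial hq0, add_assoc, mul_pow, ← pow_mul, ← pow_add, mul_assoc,
    add_comm j i]

end TwistedMul

section TwistedMatMul

variable {K : Type*} [Field K] {q : ℕ}

theorem one_twMatMul {ι γ : Type*} [Fintype ι] [DecidableEq ι] (A : Matrix ι γ K[X]) :
    twMatMul q 1 A = A := by
  ext i j : 1
  rw [twMatMul, of_apply, Finset.sum_eq_single i (fun k _ hk => by rw [one_apply_ne hk.symm,
    zero_twMul]) (by simp), one_apply_eq, one_twMul]

theorem twMatMul_one {ι α : Type*} [Fintype ι] [DecidableEq ι] (hq0 : q ≠ 0)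
    (A : Matrix α ι K[X]) : twMatMul q A 1 = A := by
  ext i j : 1
  rw [twMatMul, of_apply, Finset.sum_eq_single j (fun k _ hk => by rw [one_apply_ne hk,
    twMul_zero]) (by simp), one_apply_eq, twMul_one hq0]

variable {α β γ δ : Type*} [Fintype β]

theorem add_twMatMul (A A' : Matrix α β K[X]) (B : Matrix β γ K[X]) :
    twMatMul q (A + A') B = twMatMul q A B + twMatMul q A' B := by
  ext i j : 1
  simp only [twMatMul, of_apply, Matrix.add_apply, add_twMul, Finset.sum_add_distrib]

variable {p s : ℕ} [ExpChar K p]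

theorem twMatMul_add (hq : q = p ^ s) (A : Matrix α β K[X]) (B B' : Matrix β γ K[X]) :
    twMatMul q A (B + B') = twMatMul q A B + twMatMul q A B' := by
  ext i j : 1
  simp only [twMatMul, of_apply, Matrix.add_apply, twMul_add hq, Finset.sum_add_distrib]

theorem twMatMul_assoc [Fintype γ] (hq : q = p ^ s) (A : Matrix α β K[X]) (B : Matrix β γ K[X])
    (C : Matrix γ δ K[X]) : twMatMul q (twMatMul q A B) C = twMatMul q A (twMatMul q B C) := by
  ext i l : 1
  simp only [twMatMul, of_apply, sum_twMul, twMul_sum hq, twMul_assoc hq]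
  exact Finset.sum_comm

end TwistedMatMul

section Elementary

variable {K : Type*} [Field K] {q : ℕ} {ι : Type*} [Fintype ι] [DecidableEq ι]

theorem single_twMatMul_apply (a b : ι) (v : K[X]) (M : Matrix ι ι K[X]) (i j : ι) :
    twMatMul q (single a b v) M i j = if i = a then twMul q v (M b j) else 0 := by
  split_ifs with h
  · subst h
    rw [twMatMul, of_apply, Finset.sum_eq_single b (fun k _ hk => by
      rw [single_apply_of_col_ne _ _ hk.symm, zero_twMul]) (by simp), single_apply_same]
  · exact Finset.sum_eq_zero fun k _ => by rw [single_apply_of_row_ne (Ne.symm h), zero_twMul]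

theorem twMatMul_single_apply (a b : ι) (v : K[X]) (M : Matrix ι ι K[X]) (i j : ι) :
    twMatMul q M (single a b v) i j = if j = b then twMul q (M i a) v else 0 := by
  split_ifs with h
  · subst h
    rw [twMatMul, of_apply, Finset.sum_eq_single a (fun k _ hk => by
      rw [single_apply_of_row_ne hk.symm, twMul_zero]) (by simp), single_apply_same]
  · exact Finset.sum_eq_zero fun k _ => by rw [single_apply_of_col_ne _ _ (Ne.symm h), twMul_zero]

variable {p s : ℕ} [ExpChar K p]

theorem twMatMul_one_add_single_neg (hq : q = p ^ s) {a b : ι} (hab : a ≠ b) (v : K[X]) :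
    twMatMul q (1 + single a b v) (1 + single a b (-v)) = 1 := by
  have hq0 : q ≠ 0 := ne_zero_of_eq_pow_expChar K hq
  have hsq : twMatMul q (single a b v) (single a b (-v)) = 0 := by
    ext i j : 1
    rw [single_twMatMul_apply, single_apply_of_row_ne hab, twMul_zero, ite_self, Matrix.zero_apply]
  rw [add_twMatMul, one_twMatMul, twMatMul_add hq, twMatMul_one hq0, hsq, add_zero, add_assoc,
    ← single_add, neg_add_cancel, single_zero, add_zero]

theorem conj_one_add_single_apply (hq : q = p ^ s) {a b : ι} (v : K[X]) {M : Matrix ι ι K[X]}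
    (hM : M b a = 0) (i j : ι) :
    twMatMul q (twMatMul q (1 + single a b v) M) (1 + single a b (-v)) i j =
      M i j + (if i = a then twMul q v (M b j) else 0)
        - (if j = b then twMul q (M i a) v else 0) := by
  have hq0 : q ≠ 0 := ne_zero_of_eq_pow_expChar K hq
  have hcorr : twMatMul q (twMatMul q (single a b v) M) (single a b (-v)) i j = 0 := by
    rw [twMatMul_single_apply, single_twMatMul_apply, hM, twMul_zero, ite_self, zero_twMul,
      ite_self]
  rw [add_twMatMul, one_twMatMul, twMatMul_add hq, twMatMul_one hq0, add_twMatMul]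
  simp only [Matrix.add_apply]
  rw [hcorr, add_zero, single_twMatMul_apply, twMatMul_single_apply, twMul_neg hq]
  split_ifs <;> abel

end Elementary

open OrderDual (toDual ofDual)

-- `BlockTriangular toDual` is lower triangularity: `M i j = 0` whenever `i < j`.
def IsLowerUnitriangular {R ι : Type*} [Zero R] [One R] [LT ι] (V : Matrix ι ι R) : Prop :=
  V.BlockTriangular toDual ∧ ∀ k, V k k = 1

section Unitriangular

variable {K : Type*} [Field K] {q : ℕ} {ι : Type*} [LinearOrder ι]

theorem isLowerUnitriangular_one : IsLowerUnitriangular (1 : Matrix ι ι K[X]) :=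
  ⟨blockTriangular_one, one_apply_eq⟩

theorem isLowerUnitriangular_one_add_single {a b : ι} (hba : b < a) (v : K[X]) :
    IsLowerUnitriangular (1 + single a b v) := by
  refine ⟨fun i j hij => ?_, fun k => ?_⟩
  · rw [Matrix.add_apply, one_apply_ne (show i < j from hij).ne, single_apply_of_ne, add_zero]
    rintro ⟨rfl, rfl⟩
    exact hba.not_gt hij
  · rw [Matrix.add_apply, one_apply_eq, single_apply_of_ne, add_zero]
    rintro ⟨rfl, rfl⟩
    exact hba.false

variable [Fintype ι]

theorem Matrix.BlockTriangular.twMatMul {A B : Matrix ι ι K[X]} (hA : A.BlockTriangular toDual)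
    (hB : B.BlockTriangular toDual) : (twMatMul q A B).BlockTriangular toDual := by
  intro i j hij
  refine Finset.sum_eq_zero fun k _ => ?_
  rcases le_or_gt k i with h | h
  · rw [hB (show k < j from lt_of_le_of_lt h hij), twMul_zero]
  · rw [hA (show i < k from h), zero_twMul]

theorem twMatMul_apply_self_of_blockTriangular {A B : Matrix ι ι K[X]}
    (hA : A.BlockTriangular toDual) (hB : B.BlockTriangular toDual) (k : ι) :
    twMatMul q A B k k = twMul q (A k k) (B k k) := by
  refine Finset.sum_eq_single k (fun l _ hl => ?_) (by simp)
  rcases hl.lt_or_gt with h | h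
  · rw [hB (show l < k from h), twMul_zero]
  · rw [hA (show k < l from h), zero_twMul]

theorem IsLowerUnitriangular.twMatMul {A B : Matrix ι ι K[X]} (hA : IsLowerUnitriangular A)
    (hB : IsLowerUnitriangular B) : IsLowerUnitriangular (twMatMul q A B) :=
  ⟨hA.1.twMatMul hB.1, fun k => by
    rw [twMatMul_apply_self_of_blockTriangular hA.1 hB.1, hA.2, hB.2, one_twMul]⟩

def UnitriangularConj (q : ℕ) (M M' : Matrix ι ι K[X]) : Prop :=
  ∃ V W : Matrix ι ι K[X], IsLowerUnitriangular V ∧ IsLowerUnitriangular W ∧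
    twMatMul q V W = 1 ∧ twMatMul q W V = 1 ∧ M' = twMatMul q (twMatMul q V M) W

namespace UnitriangularConj

variable {M M' M'' : Matrix ι ι K[X]}

theorem refl (hq0 : q ≠ 0) (M : Matrix ι ι K[X]) : UnitriangularConj q M M :=
  ⟨1, 1, isLowerUnitriangular_one, isLowerUnitriangular_one, twMatMul_one hq0 1,
    twMatMul_one hq0 1, by rw [one_twMatMul, twMatMul_one hq0]⟩

theorem trans {p s : ℕ} [ExpChar K p] (hq : q = p ^ s) (h : UnitriangularConj q M M')
    (h' : UnitriangularConj q M' M'') : UnitriangularConj q M M'' := by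
  obtain ⟨V, W, hV, hW, hVW, hWV, rfl⟩ := h
  obtain ⟨E, E', hE, hE', hEE', hE'E, rfl⟩ := h'
  refine ⟨twMatMul q E V, twMatMul q W E', hE.twMatMul hV, hW.twMatMul hE', ?_, ?_, ?_⟩
  · rw [twMatMul_assoc hq, ← twMatMul_assoc hq V, hVW, one_twMatMul, hEE']
  · rw [twMatMul_assoc hq, ← twMatMul_assoc hq E', hE'E, one_twMatMul, hWV]
  · simp only [twMatMul_assoc hq]

theorem blockTriangular (h : UnitriangularConj q M M') (hM : M.BlockTriangular toDual) :
    M'.BlockTriangular toDual := by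
  obtain ⟨V, W, hV, hW, -, -, rfl⟩ := h
  exact (hV.1.twMatMul hM).twMatMul hW.1

theorem apply_self (hq0 : q ≠ 0) (h : UnitriangularConj q M M')
    (hM : M.BlockTriangular toDual) (k : ι) : M' k k = M k k := by
  obtain ⟨V, W, hV, hW, -, -, rfl⟩ := h
  rw [twMatMul_apply_self_of_blockTriangular (hV.1.twMatMul hM) hW.1,
    twMatMul_apply_self_of_blockTriangular hV.1 hM, hV.2, hW.2, one_twMul, twMul_one hq0]

end UnitriangularConj

theorem unitriangularConj_one_add_single {p s : ℕ} [ExpChar K p] (hq : q = p ^ s) {a b : ι}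
    (hba : b < a) (v : K[X]) (M : Matrix ι ι K[X]) :
    UnitriangularConj q M
      (twMatMul q (twMatMul q (1 + single a b v) M) (1 + single a b (-v))) :=
  ⟨_, _, isLowerUnitriangular_one_add_single hba v, isLowerUnitriangular_one_add_single hba (-v),
    twMatMul_one_add_single_neg hq hba.ne' v,
    by simpa using twMatMul_one_add_single_neg hq hba.ne' (-v), rfl⟩

end Unitriangular

/-- The order in which the entries are reduced: columns from right to left, each column from top
to bottom. -/
def sweep {ι : Type*} (i j : ι) : ιᵒᵈ ×ₗ ι := toLex (toDual j, i)

theorem sweep_lt_sweep {ι : Type*} [LinearOrder ι] {i j a b : ι} :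
    sweep i j < sweep a b ↔ b < j ∨ j = b ∧ i < a := by
  simp [sweep, Prod.Lex.toLex_lt_toLex]

theorem sweep_inj {ι : Type*} {i j a b : ι} : sweep i j = sweep a b ↔ i = a ∧ j = b := by
  simp [sweep, and_comm]

section Reduction

variable {K : Type*} [Field K] {p s q : ℕ} [ExpChar K p]
variable {ι : Type*} [Fintype ι] [LinearOrder ι]

theorem exists_unitriangularConj_natDegree_lt (hq : q = p ^ s) {M : Matrix ι ι K[X]}
    (hM : M.BlockTriangular toDual) {a b : ι} (hba : b < a)
    (hab : (M a a).natDegree < (M b b).natDegree) (hge : (M b b).natDegree ≤ (M a b).natDegree) :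
    ∃ M', UnitriangularConj q M M' ∧ (∀ i j, sweep i j < sweep a b → M' i j = M i j) ∧
      (M' a b).natDegree < (M a b).natDegree := by
  have hq0 : q ≠ 0 := ne_zero_of_eq_pow_expChar K hq
  have hba0 : M b a = 0 := hM (show b < a from hba)
  obtain ⟨v, hv⟩ := exists_natDegree_add_twMul_sub_twMul_lt hq0 hab hge
  refine ⟨_, unitriangularConj_one_add_single hq hba v M, fun i j hij => ?_, ?_⟩
  · rw [conj_one_add_single_apply hq v hba0]
    rcases sweep_lt_sweep.1 hij with hbj | ⟨rfl, hia⟩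
    · rw [hM (show b < j from hbj), twMul_zero, ite_self, if_neg hbj.ne', add_zero, sub_zero]
    · rw [if_neg hia.ne, hM (show i < a from hia), zero_twMul, ite_self, add_zero, sub_zero]
  · rwa [conj_one_add_single_apply hq v hba0, if_pos rfl, if_pos rfl]

theorem exists_unitriangularConj_natDegree_lt_diag (hq : q = p ^ s) {M : Matrix ι ι K[X]}
    (hM : M.BlockTriangular toDual) {a b : ι} (hba : b < a)
    (hab : (M a a).natDegree < (M b b).natDegree) :
    ∃ M', UnitriangularConj q M M' ∧ (∀ i j, sweep i j < sweep a b → M' i j = M i j) ∧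
      (M' a b).natDegree < (M b b).natDegree := by
  have hq0 : q ≠ 0 := ne_zero_of_eq_pow_expChar K hq
  induction hd : (M a b).natDegree using Nat.strong_induction_on generalizing M with
  | _ d ih =>
  by_cases hlt : (M a b).natDegree < (M b b).natDegree
  · exact ⟨M, .refl hq0 M, fun _ _ _ => rfl, hlt⟩
  obtain ⟨M₁, h₁, hsame₁, hdeg₁⟩ :=
    exists_unitriangularConj_natDegree_lt hq hM hba hab (not_lt.1 hlt)
  have hdiag₁ := h₁.apply_self hq0 hM
  obtain ⟨M₂, h₂, hsame₂, hdeg₂⟩ :=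
    ih _ (hd ▸ hdeg₁) (h₁.blockTriangular hM) (by rwa [hdiag₁, hdiag₁]) rfl
  exact ⟨M₂, h₁.trans hq h₂, fun i j h => (hsame₂ i j h).trans (hsame₁ i j h),
    hdiag₁ b ▸ hdeg₂⟩

theorem exists_unitriangularConj_forall_natDegree_lt_diag (hq : q = p ^ s) {M : Matrix ι ι K[X]}
    (hM : M.BlockTriangular toDual)
    (hdiag : ∀ i j, j < i → (M i i).natDegree < (M j j).natDegree) :
    ∃ M', UnitriangularConj q M M' ∧
      ∀ i j, j < i → (M' i j).natDegree < (M j j).natDegree := by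
  have hq0 : q ≠ 0 := ne_zero_of_eq_pow_expChar K hq
  suffices ∀ S : Finset (ιᵒᵈ ×ₗ ι), ∃ M', UnitriangularConj q M M' ∧
      ∀ i j, j < i → sweep i j ∈ S → (M' i j).natDegree < (M j j).natDegree by
    obtain ⟨M', h, hred⟩ := this Finset.univ
    exact ⟨M', h, fun i j hji => hred i j hji (Finset.mem_univ _)⟩
  intro S
  induction S using Finset.induction_on_max with
  | empty => exact ⟨M, .refl hq0 M, by simp⟩
  | insert x S hS ih =>
  obtain ⟨M₁, h₁, hred₁⟩ := ih
  obtain ⟨a, b, rfl⟩ : ∃ a b, x = sweep a b := ⟨(ofLex x).2, ofDual (ofLex x).1, rfl⟩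
  have hdiag₁ := h₁.apply_self hq0 hM
  by_cases hba : b < a
  · obtain ⟨M₂, h₂, hsame, hdeg⟩ := exists_unitriangularConj_natDegree_lt_diag hq
      (h₁.blockTriangular hM) hba (by rw [hdiag₁, hdiag₁]; exact hdiag a b hba)
    refine ⟨M₂, h₁.trans hq h₂, fun i j hji hmem => ?_⟩
    rcases Finset.mem_insert.1 hmem with heq | hmem
    · obtain ⟨rfl, rfl⟩ := sweep_inj.1 heq
      rwa [← hdiag₁]
    · rw [hsame i j (hS _ hmem)]
      exact hred₁ i j hji hmem
  · refine ⟨M₁, h₁, fun i j hji hmem => ?_⟩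
    rcases Finset.mem_insert.1 hmem with heq | hmem
    · obtain ⟨rfl, rfl⟩ := sweep_inj.1 heq
      exact absurd hji hba
    · exact hred₁ i j hji hmem

end Reduction

theorem LD_biderivations_over_K_general
    {K : Type*} [Field K] (p s q : ℕ) [Fact p.Prime] (hq : q = p ^ s)
    [Algebra (GaloisField p s) K] (θ : K) {n : ℕ}
    (Υ : Matrix (Fin n) (Fin n) (Polynomial K))
    (ψ : Fin n → Polynomial K) (r : Fin n → ℕ)
    (hΥ : IsTriangular θ Υ ψ r)
    (hmono : ∀ i j : Fin n, i < j → r i < r j) :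
    ∃ V W : Matrix (Fin n) (Fin n) (Polynomial K),
      (∀ i j : Fin n, i < j → V i j = 0) ∧
      (∀ k : Fin n, V k k = 1) ∧
      twMatMul q V W = 1 ∧ twMatMul q W V = 1 ∧
      ∃ Υ' : Matrix (Fin n) (Fin n) (Polynomial K),
        Υ' = twMatMul q (twMatMul q V Υ) W ∧
        (∀ i j : Fin n, i < j → Υ' i j = 0) ∧
        (∀ k : Fin n, Υ' k k = ψ k.rev) ∧
        (∀ a b : Fin n, b < a → (Υ' a b).natDegree < r b.rev) := by
  have : CharP K p :=
    charP_of_injective_algebraMap (algebraMap (GaloisField p s) K).injective p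
  obtain ⟨hlower, hdiag, hdrinfeld⟩ := hΥ
  have hM : Υ.BlockTriangular toDual := fun i j hij => hlower i j hij
  have hdeg : ∀ k, (Υ k k).natDegree = r k.rev := fun k => by
    rw [hdiag, (hdrinfeld _).2.2.1]
  obtain ⟨Υ', hconj, hred⟩ := exists_unitriangularConj_forall_natDegree_lt_diag hq hM
    fun i j hji => by rw [hdeg, hdeg]; exact hmono _ _ (Fin.rev_lt_rev.2 hji)
  have hlower' := hconj.blockTriangular hM
  have hdiag' := hconj.apply_self (ne_zero_of_eq_pow_expChar K hq) hM
  obtain ⟨V, W, hV, -, hVW, hWV, rfl⟩ := hconj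
  exact ⟨V, W, fun i j hij => hV.1 hij, hV.2, hVW, hWV, _, rfl, fun i j hij => hlower' hij,
    fun k => (hdiag' k).trans (hdiag k), fun a b hba => hdeg b ▸ hred a b hba⟩

/-- strictly increasing ranks: LD-biderivations over `K` itself.
If `r₁ < r₂ < ⋯ < rₙ`, then there is a lower triangular `V` over `K{τ}` with diagonal
entries `1` (with two-sided twisted inverse `W`) such that `V·Υ_t·V⁻¹` is lower
triangular with the same diagonal entries and every below-diagonal entry, lying in the
column whose diagonal position carries `ψⱼ`, has `τ`-degree strictly smaller than `rⱼ`;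
in particular `Υ` allows for low-degree biderivations and no field extension is needed. -/
theorem LD_biderivations_over_K
    {K : Type*} [Field K] (p s q : ℕ) [Fact p.Prime] (hs : 0 < s) (hq : q = p ^ s)
    [Algebra (GaloisField p s) K] (θ : K) {n : ℕ}
    (Υ : Matrix (Fin n) (Fin n) (Polynomial K))
    (ψ : Fin n → Polynomial K) (r : Fin n → ℕ)
    (hΥ : IsTriangular θ Υ ψ r)
    (hmono : ∀ i j : Fin n, i < j → r i < r j) :
    ∃ V W : Matrix (Fin n) (Fin n) (Polynomial K),
      (∀ i j : Fin n, i < j → V i j = 0) ∧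
      (∀ k : Fin n, V k k = 1) ∧
      twMatMul q V W = 1 ∧ twMatMul q W V = 1 ∧
      ∃ Υ' : Matrix (Fin n) (Fin n) (Polynomial K),
        Υ' = twMatMul q (twMatMul q V Υ) W ∧
        (∀ i j : Fin n, i < j → Υ' i j = 0) ∧
        (∀ k : Fin n, Υ' k k = ψ k.rev) ∧
        (∀ a b : Fin n, b < a → (Υ' a b).natDegree < r b.rev) :=
  LD_biderivations_over_K_general p s q hq θ Υ ψ r hΥ hmono
end
end

section
/- Let K be an A-field, Υ a triangular t-module of dimension n over K with diagonal Drinfeld modules ψ_1,…,ψ_n, and Υ̂ a triangular t-module of dimension m over K with diagonal Drinfeld modules ψ̂_1,…,ψ̂_m. If rk ψ_l ≠ rk ψ̂_j for every pair (l,j), then Hom_τ(Υ,Υ̂) = 0 and Hom_τ(Υ̂,Υ) = 0; that is, the only matrix F ∈ Mat_{m×n}(K{τ}) with F·Υ_t = Υ̂_t·F is F = 0, and the only matrix G ∈ Mat_{n×m}(K{τ}) with G·Υ̂_t = Υ_t·G is G = 0. -/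
open Polynomial Matrix Finset

noncomputable section

lemma twMul_zero_left {K : Type*} [Field K] (q : ℕ) (g : Polynomial K) : twMul q 0 g = 0 := by
  simp [twMul]

lemma twMul_zero_right {K : Type*} [Field K] (q : ℕ) (f : Polynomial K) : twMul q f 0 = 0 := by
  simp [twMul, Polynomial.sum]

lemma twMul_natDegree_le {K : Type*} [Field K] (q : ℕ) (f g : Polynomial K) :
    (twMul q f g).natDegree ≤ f.natDegree + g.natDegree := by
  unfold twMul Polynomial.sum
  apply Polynomial.natDegree_sum_le_of_forall_le
  intro i hi
  apply Polynomial.natDegree_sum_le_of_forall_le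
  intro j hj
  refine (Polynomial.natDegree_C_mul_le _ _).trans ?_
  rw [Polynomial.natDegree_X_pow]
  exact Nat.add_le_add (Polynomial.le_natDegree_of_mem_supp i hi)
    (Polynomial.le_natDegree_of_mem_supp j hj)

lemma twMul_coeff_top {K : Type*} [Field K] (q : ℕ) (f g : Polynomial K)
    (hf : f ≠ 0) (hg : g ≠ 0) :
    (twMul q f g).coeff (f.natDegree + g.natDegree)
      = f.leadingCoeff * g.leadingCoeff ^ q ^ f.natDegree := by
  unfold twMul Polynomial.sum
  rw [Polynomial.finset_sum_coeff]
  rw [Finset.sum_eq_single f.natDegree]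
  · rw [Polynomial.finset_sum_coeff, Finset.sum_eq_single g.natDegree]
    · rw [Polynomial.coeff_C_mul, Polynomial.coeff_X_pow, if_pos rfl, mul_one]
      rfl
    · intro j hj hne
      have hjle : j ≤ g.natDegree := Polynomial.le_natDegree_of_mem_supp j hj
      rw [Polynomial.coeff_C_mul, Polynomial.coeff_X_pow, if_neg (by omega), mul_zero]
    · intro h
      exact absurd (Polynomial.natDegree_mem_support_of_nonzero hg) h
  · intro i hi hne
    have hile : i ≤ f.natDegree := Polynomial.le_natDegree_of_mem_supp i hi
    rw [Polynomial.finset_sum_coeff]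
    apply Finset.sum_eq_zero
    intro j hj
    have hjle : j ≤ g.natDegree := Polynomial.le_natDegree_of_mem_supp j hj
    rw [Polynomial.coeff_C_mul, Polynomial.coeff_X_pow, if_neg (by omega), mul_zero]
  · intro h
    exact absurd (Polynomial.natDegree_mem_support_of_nonzero hf) h

lemma twMul_natDegree_eq {K : Type*} [Field K] (q : ℕ) (f g : Polynomial K)
    (hf : f ≠ 0) (hg : g ≠ 0) :
    (twMul q f g).natDegree = f.natDegree + g.natDegree := by
  refine le_antisymm (twMul_natDegree_le q f g) (Polynomial.le_natDegree_of_ne_zero ?_)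
  rw [twMul_coeff_top q f g hf hg]
  exact mul_ne_zero (Polynomial.leadingCoeff_ne_zero.mpr hf)
    (pow_ne_zero _ (Polynomial.leadingCoeff_ne_zero.mpr hg))

lemma eq_zero_of_twMul_eq {K : Type*} [Field K] (q : ℕ) (f ψ ψ' : Polynomial K)
    (hψ : ψ ≠ 0) (hψ' : ψ' ≠ 0) (hne : ψ.natDegree ≠ ψ'.natDegree)
    (h : twMul q f ψ = twMul q ψ' f) : f = 0 := by
  by_contra hf
  have d1 := twMul_natDegree_eq q f ψ hf hψ
  have d2 := twMul_natDegree_eq q ψ' f hψ' hf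
  rw [h, d2] at d1
  omega

lemma drinfeld_ne_zero {K : Type*} [Field K] {θ : K} {r : ℕ} {ψ : Polynomial K}
    (h : IsDrinfeld θ r ψ) : ψ ≠ 0 := fun h0 => h.2.2.2 (by simp [h0])

lemma hom_zero_aux {K : Type*} [Field K] (q : ℕ) (θ : K) {n m : ℕ}
    (Υ : Matrix (Fin n) (Fin n) (Polynomial K))
    (ψ : Fin n → Polynomial K) (r : Fin n → ℕ)
    (hΥ : IsTriangular θ Υ ψ r)
    (Υ' : Matrix (Fin m) (Fin m) (Polynomial K))
    (ψ' : Fin m → Polynomial K) (r' : Fin m → ℕ)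
    (hΥ' : IsTriangular θ Υ' ψ' r')
    (hrk : ∀ (l : Fin n) (j : Fin m), r l ≠ r' j)
    (F : Matrix (Fin m) (Fin n) (Polynomial K))
    (hF : twMatMul q F Υ = twMatMul q Υ' F) : F = 0 := by
  obtain ⟨hlow, hdiag, hdr⟩ := hΥ
  obtain ⟨hlow', hdiag', hdr'⟩ := hΥ'
  have key : ∀ d : ℕ, ∀ (i : Fin m) (k : Fin n), (i : ℕ) + (n - 1 - (k : ℕ)) < d →
      F i k = 0 := by
    intro d
    induction d with
    | zero => omega
    | succ d ih =>
      intro i k hd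
      have heq : ∑ j, twMul q (F i j) (Υ j k) = ∑ j, twMul q (Υ' i j) (F j k) := by
        have := congrFun (congrFun hF i) k
        simpa [twMatMul] using this
      rw [Finset.sum_eq_single k, Finset.sum_eq_single i] at heq
      · have hψk := hdr k.rev
        have hψi := hdr' i.rev
        rw [hdiag k, hdiag' i] at heq
        refine eq_zero_of_twMul_eq q _ _ _ (drinfeld_ne_zero hψk)
          (drinfeld_ne_zero hψi) ?_ heq
        rw [hψk.2.2.1, hψi.2.2.1]
        exact hrk k.rev i.rev
      · -- other j in the RHS sum
        intro j _ hne
        rcases lt_or_gt_of_ne hne with hlt | hgt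
        · -- j < i : F j k = 0 by ih
          rw [ih j k (by have := k.is_lt; have := j.is_lt; have := Fin.lt_iff_val_lt_val.mp hlt; omega),
            twMul_zero_right]
        · -- j > i : Υ' i j = 0
          rw [hlow' i j hgt, twMul_zero_left]
      · intro h; exact absurd (Finset.mem_univ i) h
      · intro j _ hne
        rcases lt_or_gt_of_ne hne with hlt | hgt
        · -- j < k : Υ j k = 0
          rw [hlow j k hlt, twMul_zero_right]
        · -- j > k : F i j = 0 by ih
          rw [ih i j (by have := j.is_lt; have := Fin.lt_iff_val_lt_val.mp hgt; omega),
            twMul_zero_left]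
      · intro h; exact absurd (Finset.mem_univ k) h
  apply Matrix.ext
  intro i k
  simpa using key ((i : ℕ) + (n - 1 - (k : ℕ)) + 1) i k (by omega)

/-- vanishing of Hom between triangular t-modules whose diagonal
Drinfeld modules have totally distinct ranks.  If `rk ψ_l ≠ rk ψ̂_j` for every pair
`(l,j)`, then the only morphism `Υ → Υ̂` is `0` and the only morphism `Υ̂ → Υ` is `0`. -/
theorem hom_vanishing_distinct_ranks
    {K : Type*} [Field K] (p s q : ℕ) [Fact p.Prime] (hs : 0 < s) (hq : q = p ^ s)
    [Algebra (GaloisField p s) K] (θ : K) {n m : ℕ}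
    (Υ : Matrix (Fin n) (Fin n) (Polynomial K))
    (ψ : Fin n → Polynomial K) (r : Fin n → ℕ)
    (hΥ : IsTriangular θ Υ ψ r)
    (Υ' : Matrix (Fin m) (Fin m) (Polynomial K))
    (ψ' : Fin m → Polynomial K) (r' : Fin m → ℕ)
    (hΥ' : IsTriangular θ Υ' ψ' r')
    (hrk : ∀ (l : Fin n) (j : Fin m), r l ≠ r' j) :
    (∀ F : Matrix (Fin m) (Fin n) (Polynomial K),
      twMatMul q F Υ = twMatMul q Υ' F → F = 0) ∧
    (∀ G : Matrix (Fin n) (Fin m) (Polynomial K),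
      twMatMul q G Υ' = twMatMul q Υ G → G = 0) :=
  ⟨fun F hF => hom_zero_aux q θ Υ ψ r hΥ Υ' ψ' r' hΥ' hrk F hF,
   fun G hG => hom_zero_aux q θ Υ' ψ' r' hΥ' Υ ψ r hΥ (fun l j => (hrk j l).symm) G hG⟩
end
end
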